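/- Let D ⊂ ℝ³ be a nonempty bounded open set, k > 0, and let f ∈ L²(D;ℂ) (extended by zero outside D). Define u(x) = ∫_D G₀(x,y) f(y) dy for x outside the closure of D. Then 4π|x|·e^{−ik|x|}·u(x) + f̂(k·x/|x|) → 0 as |x| → ∞, where f̂(ξ) = ∫_D e^{−i ξ·y} f(y) dy is the Fourier transform of f. In other words, u(x) = −(e^{ik|x|}/(4π|x|))·f̂(k x̂) + o(1/|x|) in the far field. -/

import Mathlib

open MeasureTheory Complex Filter

noncomputable abbrev E3 : Type := EuclideanSpace ℝ (Fin 3)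

/-- The outgoing Green function of the Helmholtz operator `Δ + k²` in `ℝ³`:
`G₀(x,y) = −e^{ik|x−y|}/(4π|x−y|)`. -/
noncomputable def G0 (k : ℝ) (x y : E3) : ℂ :=
  - Complex.exp (Complex.I * k * ‖x - y‖) / (4 * Real.pi * ‖x - y‖)

/-- The Fourier transform of `f` (supported in `D`): `f̂(ξ) = ∫_D e^{−iξ·y} f(y) dy`. -/
noncomputable def fourierT (D : Set E3) (f : E3 → ℂ) (ξ : E3) : ℂ :=
  ∫ y in D, Complex.exp (-Complex.I * ((inner ℝ ξ y : ℝ) : ℂ)) * f y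

/-!
Writing `r = |x|/|x−y|` and `θ = |x−y| − |x| + x̂·y`, the integrand of
`4π|x| e^{−ik|x|} u(x) + f̂(k x̂)` is `e^{−ik x̂·y} (1 − r e^{ikθ}) f(y)`. For fixed `y`, elementary
estimates give `r → 1` and `θ = O(1/|x|)` as `|x| → ∞`, so the bracket tends to `0`; for `y ∈ D`
and `|x| ≥ 2 sup_D |y|` it is bounded by `3`. Since `f ∈ L²(D) ⊆ L¹(D)` (`D` has finite measure),
dominated convergence concludes.
-/

instance Bornology.cobounded.isCountablyGenerated {E : Type*} [SeminormedAddCommGroup E] :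
    (Bornology.cobounded E).IsCountablyGenerated := by
  rw [← comap_norm_atTop]
  infer_instance

theorem tendsto_integral_mul_of_tendsto_zero {α ι 𝕜 : Type*} [MeasurableSpace α] {μ : Measure α}
    {l : Filter ι} [l.IsCountablyGenerated] [NormedRing 𝕜] [NormedSpace ℝ 𝕜]
    {K : ι → α → 𝕜} {f : α → 𝕜} {C : ℝ} (hf : Integrable f μ)
    (hK_meas : ∀ᶠ i in l, AEStronglyMeasurable (K i) μ)
    (hK_bdd : ∀ᶠ i in l, ∀ᵐ a ∂μ, ‖K i a‖ ≤ C)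
    (hK : ∀ᵐ a ∂μ, Tendsto (fun i => K i a) l (nhds 0)) :
    Tendsto (fun i => ∫ a, K i a * f a ∂μ) l (nhds 0) := by
  have := tendsto_integral_filter_of_dominated_convergence (fun a => C * ‖f a‖)
    (hK_meas.mono fun i h => h.mul hf.1)
    (hK_bdd.mono fun i h => h.mono fun a ha =>
      (norm_mul_le _ _).trans (mul_le_mul_of_nonneg_right ha (norm_nonneg _)))
    (hf.norm.const_mul C) (hK.mono fun a ha => by simpa using ha.mul_const (f a))
  rwa [integral_zero] at this

section Asymptotics

variable {E : Type*}

section Normed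

variable [SeminormedAddCommGroup E]

theorem tendsto_const_div_norm_sub_cobounded (c a : ℝ) :
    Tendsto (fun x : E => c / (‖x‖ - a)) (Bornology.cobounded E) (nhds 0) := by
  refine tendsto_const_nhds.div_atTop ?_
  simpa [sub_eq_add_neg] using tendsto_atTop_add_const_right _ (-a) tendsto_norm_cobounded_atTop

theorem norm_div_norm_sub_le_two {x y : E} (h : 2 * ‖y‖ ≤ ‖x‖) : ‖x‖ / ‖x - y‖ ≤ 2 := by
  have := norm_sub_norm_le x y
  exact div_le_of_le_mul₀ (norm_nonneg _) zero_le_two (by linarith)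

theorem abs_norm_div_norm_sub_sub_one_le {x y : E} (h : ‖y‖ < ‖x‖) :
    |‖x‖ / ‖x - y‖ - 1| ≤ ‖y‖ / (‖x‖ - ‖y‖) := by
  have hxy : ‖x‖ - ‖y‖ ≤ ‖x - y‖ := norm_sub_norm_le x y
  have hpos : 0 < ‖x - y‖ := by linarith
  have hnum : |‖x‖ - ‖x - y‖| ≤ ‖y‖ := by simpa using abs_norm_sub_norm_le x (x - y)
  calc |‖x‖ / ‖x - y‖ - 1| = |‖x‖ - ‖x - y‖| / ‖x - y‖ := by
        rw [div_sub_one hpos.ne', abs_div, abs_of_pos hpos]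
    _ ≤ ‖y‖ / ‖x - y‖ := by gcongr
    _ ≤ ‖y‖ / (‖x‖ - ‖y‖) := by gcongr

theorem tendsto_norm_div_norm_sub_cobounded (y : E) :
    Tendsto (fun x : E => ‖x‖ / ‖x - y‖) (Bornology.cobounded E) (nhds 1) := by
  rw [← tendsto_sub_nhds_zero_iff]
  refine squeeze_zero_norm' ?_ (tendsto_const_div_norm_sub_cobounded ‖y‖ ‖y‖)
  filter_upwards [tendsto_norm_cobounded_atTop.eventually_gt_atTop ‖y‖] with x hx
  exact abs_norm_div_norm_sub_sub_one_le hx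

end Normed

section InnerProduct

variable [NormedAddCommGroup E] [InnerProductSpace ℝ E]

theorem abs_norm_sub_sub_norm_add_inner_le {x y : E} (h : ‖y‖ < ‖x‖) :
    |‖x - y‖ - ‖x‖ + inner ℝ (‖x‖⁻¹ • x) y| ≤ ‖y‖ ^ 2 / (‖x‖ - ‖y‖) := by
  set q := inner ℝ (‖x‖⁻¹ • x) y
  have hx : 0 < ‖x‖ := (norm_nonneg y).trans_lt h
  have hxy : ‖x‖ - ‖y‖ ≤ ‖x - y‖ := norm_sub_norm_le x y
  have hq : |q| ≤ ‖y‖ := by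
    simpa [norm_smul, inv_mul_cancel₀ hx.ne'] using abs_real_inner_le_norm (‖x‖⁻¹ • x) y
  obtain ⟨hq₁, hq₂⟩ := abs_le.1 hq
  have hxq : ‖x‖ * q = inner ℝ x y := by
    simp only [q, real_inner_smul_left, mul_inv_cancel_left₀ hx.ne']
  have hden : 0 < ‖x - y‖ + (‖x‖ - q) := by linarith
  -- rationalise: `|x − y|² − (|x| − q)² = |y|² − q²`
  have hθ : ‖x - y‖ - ‖x‖ + q = (‖y‖ ^ 2 - q ^ 2) / (‖x - y‖ + (‖x‖ - q)) := by
    rw [eq_div_iff hden.ne']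
    linear_combination norm_sub_sq_real x y + 2 * hxq
  have hnum : |‖y‖ ^ 2 - q ^ 2| ≤ ‖y‖ ^ 2 := by
    rw [abs_le]
    exact ⟨by nlinarith, by nlinarith⟩
  rw [hθ, abs_div, abs_of_pos hden]
  calc |‖y‖ ^ 2 - q ^ 2| / (‖x - y‖ + (‖x‖ - q)) ≤ ‖y‖ ^ 2 / (‖x - y‖ + (‖x‖ - q)) := by
        gcongr
    _ ≤ ‖y‖ ^ 2 / (‖x‖ - ‖y‖) := by gcongr; linarith

theorem tendsto_norm_sub_sub_norm_add_inner_cobounded (y : E) :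
    Tendsto (fun x : E => ‖x - y‖ - ‖x‖ + inner ℝ (‖x‖⁻¹ • x) y) (Bornology.cobounded E)
      (nhds 0) := by
  refine squeeze_zero_norm' ?_ (tendsto_const_div_norm_sub_cobounded (‖y‖ ^ 2) ‖y‖)
  filter_upwards [tendsto_norm_cobounded_atTop.eventually_gt_atTop ‖y‖] with x hx
  exact abs_norm_sub_sub_norm_add_inner_le hx

end InnerProduct

end Asymptotics

section FarField

open Metric

noncomputable def farFieldError (k : ℝ) (x y : E3) : ℂ :=
  exp (-I * ((inner ℝ (k • (‖x‖⁻¹ • x)) y : ℝ) : ℂ))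
    + ((4 * Real.pi * ‖x‖ : ℝ) : ℂ) * exp (-I * k * ‖x‖) * G0 k x y

theorem measurable_farFieldError (k : ℝ) (x : E3) : Measurable (farFieldError k x) := by
  unfold farFieldError G0
  fun_prop

theorem four_pi_norm_mul_exp_mul_G0 (k : ℝ) (x y : E3) :
    ((4 * Real.pi * ‖x‖ : ℝ) : ℂ) * exp (-I * k * ‖x‖) * G0 k x y
      = -(((‖x‖ / ‖x - y‖ : ℝ) : ℂ) * exp (I * ((k * (‖x - y‖ - ‖x‖) : ℝ) : ℂ))) := by
  rcases eq_or_ne ‖x - y‖ 0 with h | h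
  · simp [G0, h]
  have hπ : (Real.pi : ℂ) ≠ 0 := ofReal_ne_zero.2 Real.pi_ne_zero
  have h' : (‖x - y‖ : ℂ) ≠ 0 := ofReal_ne_zero.2 h
  rw [G0, show I * ((k * (‖x - y‖ - ‖x‖) : ℝ) : ℂ) = -I * k * ‖x‖ + I * k * ‖x - y‖ by
    push_cast; ring, exp_add]
  push_cast
  field_simp

theorem norm_farFieldError (k : ℝ) (x y : E3) :
    ‖farFieldError k x y‖ = ‖1 - ((‖x‖ / ‖x - y‖ : ℝ) : ℂ)
      * exp (I * ((k * (‖x - y‖ - ‖x‖ + inner ℝ (‖x‖⁻¹ • x) y) : ℝ) : ℂ))‖ := by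
  set p : ℝ := inner ℝ (‖x‖⁻¹ • x) y
  have hfactor : farFieldError k x y = exp (-I * ((k * p : ℝ) : ℂ)) * (1 - ((‖x‖ / ‖x - y‖ : ℝ) : ℂ)
      * exp (I * ((k * (‖x - y‖ - ‖x‖ + p) : ℝ) : ℂ))) := by
    rw [farFieldError, four_pi_norm_mul_exp_mul_G0, real_inner_smul_left, ← sub_eq_add_neg,
      mul_sub (exp _), mul_one, mul_left_comm (exp _), ← exp_add]
    congr 3
    push_cast
    ring
  simp [hfactor, norm_exp]

theorem tendsto_farFieldError (k : ℝ) (y : E3) :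
    Tendsto (fun x => farFieldError k x y) (Bornology.cobounded E3) (nhds 0) := by
  have hr : Tendsto (fun x : E3 => ((‖x‖ / ‖x - y‖ : ℝ) : ℂ)) (Bornology.cobounded E3) (nhds 1) := by
    simpa only [ofReal_one] using (tendsto_norm_div_norm_sub_cobounded y).ofReal
  have hphase : Tendsto (fun x : E3 =>
      exp (I * ((k * (‖x - y‖ - ‖x‖ + inner ℝ (‖x‖⁻¹ • x) y) : ℝ) : ℂ)))
      (Bornology.cobounded E3) (nhds 1) := by
    have hθ := ((tendsto_norm_sub_sub_norm_add_inner_cobounded y).const_mul k).ofReal.const_mul I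
    simpa using hθ.cexp
  rw [tendsto_zero_iff_norm_tendsto_zero]
  simp_rw [norm_farFieldError]
  simpa using (tendsto_const_nhds (x := (1 : ℂ)).sub (hr.mul hphase)).norm

theorem norm_farFieldError_le (k : ℝ) {x y : E3} (h : 2 * ‖y‖ ≤ ‖x‖) :
    ‖farFieldError k x y‖ ≤ 3 := by
  have hr := norm_div_norm_sub_le_two h
  rw [norm_farFieldError]
  refine (norm_sub_le _ _).trans ?_
  rw [norm_one, norm_mul, norm_exp_I_mul_ofReal, mul_one, norm_real,
    Real.norm_of_nonneg (by positivity)]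
  linarith

variable {D : Set E3} {R : ℝ}

theorem ae_restrict_norm_farFieldError_le (hDR : D ⊆ closedBall 0 R) (k : ℝ) {x : E3}
    (hx : 2 * R ≤ ‖x‖) : ∀ᵐ y ∂volume.restrict D, ‖farFieldError k x y‖ ≤ 3 :=
  ae_restrict_of_ae_restrict_of_subset hDR <|
    ae_restrict_of_forall_mem measurableSet_closedBall fun y hy =>
      norm_farFieldError_le k (by rw [mem_closedBall_zero_iff] at hy; linarith)

theorem integral_farFieldError_mul (hDR : D ⊆ closedBall 0 R) {f : E3 → ℂ}
    (hf : Integrable f (volume.restrict D)) (k : ℝ) {x : E3} (hx : 2 * R ≤ ‖x‖) :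
    ∫ y in D, farFieldError k x y * f y
      = ((4 * Real.pi * ‖x‖ : ℝ) : ℂ) * exp (-I * k * ‖x‖) * (∫ y in D, G0 k x y * f y)
        + fourierT D f (k • (‖x‖⁻¹ • x)) := by
  have hErr : Integrable (fun y => farFieldError k x y * f y) (volume.restrict D) :=
    hf.bdd_mul (measurable_farFieldError k x).aestronglyMeasurable
      (ae_restrict_norm_farFieldError_le hDR k hx)
  have hwave : Integrable (fun y => exp (-I * ((inner ℝ (k • (‖x‖⁻¹ • x)) y : ℝ) : ℂ)) * f y)
      (volume.restrict D) :=
    hf.bdd_mul (c := 1) (by fun_prop) (ae_of_all _ fun y => by simp [norm_exp])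
  rw [← sub_eq_iff_eq_add, fourierT, ← integral_sub hErr hwave, ← integral_const_mul]
  congr 1 with y
  rw [farFieldError]
  ring

end FarField

theorem farfield_expansion_general (D : Set E3) (hDb : Bornology.IsBounded D) (k : ℝ)
    (f : Lp ℂ 2 (volume.restrict D))
    (u : E3 → ℂ) (hu : ∀ x ∉ closure D, u x = ∫ y in D, G0 k x y * f y) :
    Tendsto (fun x : E3 =>
        ((4 * Real.pi * ‖x‖ : ℝ) : ℂ) * Complex.exp (-Complex.I * k * ‖x‖) * u x
          + fourierT D f (k • (‖x‖⁻¹ • x)))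
      (Bornology.cobounded E3) (nhds 0) := by
  obtain ⟨R, hR, hDR⟩ := hDb.subset_closedBall_lt 0 (0 : E3)
  have : IsFiniteMeasure (volume.restrict D) := ⟨by simpa using hDb.measure_lt_top⟩
  have hf : Integrable f (volume.restrict D) := (Lp.memLp f).integrable one_le_two
  have hfar : ∀ᶠ x in Bornology.cobounded E3, 2 * R < ‖x‖ :=
    tendsto_norm_cobounded_atTop.eventually_gt_atTop _
  have hlim := tendsto_integral_mul_of_tendsto_zero hf
    (.of_forall fun x => (measurable_farFieldError k x).aestronglyMeasurable)
    (hfar.mono fun x hx => ae_restrict_norm_farFieldError_le hDR k hx.le)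
    (ae_of_all _ (tendsto_farFieldError k))
  refine hlim.congr' (hfar.mono fun x hx => ?_)
  have hxD : x ∉ closure D := fun hxD => by
    have := mem_closedBall_zero_iff.1 (closure_minimal hDR Metric.isClosed_closedBall hxD)
    linarith
  dsimp only
  rw [hu x hxD]
  exact integral_farFieldError_mul hDR hf k hx.le

/-- in the far field, `u(x) = ∫_D G₀(x,y) f(y) dy` behaves like
`−(e^{ik|x|}/(4π|x|))·f̂(k x̂)`: one has
`4π|x|·e^{−ik|x|}·u(x) + f̂(k·x/|x|) → 0` as `|x| → ∞`. -/
theorem farfield_expansion (D : Set E3) (hne : D.Nonempty) (hDo : IsOpen D)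
    (hDb : Bornology.IsBounded D) (k : ℝ) (hk : 0 < k)
    (f : Lp ℂ 2 (volume.restrict D))
    (u : E3 → ℂ) (hu : ∀ x ∉ closure D, u x = ∫ y in D, G0 k x y * f y) :
    Tendsto (fun x : E3 =>
        ((4 * Real.pi * ‖x‖ : ℝ) : ℂ) * Complex.exp (-Complex.I * k * ‖x‖) * u x
          + fourierT D f (k • (‖x‖⁻¹ • x)))
      (Bornology.cobounded E3) (nhds 0) :=
  farfield_expansion_general D hDb k f u hu
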